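/- arXiv:2510.07056 — 5 statements merged into one kernel-verified Lean document; each statement's English description precedes it below -/
import Mathlib

section
/- Let ℓ be a prime, m ≥ 1 an integer, t ∈ Z/ℓᵐZ and d ∈ (Z/ℓᵐZ)ˣ. Then the number of matrices A ∈ GL₂(Z/ℓᵐZ) with trace(A) = t and det(A) = d is O(ℓ^{2m}), with an absolute implied constant. -/
open Finset

private lemma aux_pow_dvd_mul {ℓ h k x y : ℕ} (hp : ℓ.Prime) (hhk : 2 * h ≤ k + 1)
    (hd : ℓ ^ k ∣ x * y) : ℓ ^ h ∣ x ∨ ℓ ^ h ∣ y := by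
  by_contra hc
  push_neg at hc
  obtain ⟨hx, hy⟩ := hc
  have hx0 : x ≠ 0 := by rintro rfl; exact hx (dvd_zero _)
  have hy0 : y ≠ 0 := by rintro rfl; exact hy (dvd_zero _)
  have hfx : ¬ h ≤ x.factorization ℓ := fun hle =>
    hx ((Nat.Prime.pow_dvd_iff_le_factorization hp hx0).2 hle)
  have hfy : ¬ h ≤ y.factorization ℓ := fun hle =>
    hy ((Nat.Prime.pow_dvd_iff_le_factorization hp hy0).2 hle)
  have hk' : k ≤ (x * y).factorization ℓ :=
    (Nat.Prime.pow_dvd_iff_le_factorization hp (mul_ne_zero hx0 hy0)).1 hd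
  rw [Nat.factorization_mul hx0 hy0, Finsupp.add_apply] at hk'
  omega

private lemma aux_card_dvd_val (N j : ℕ) [NeZero N] (hj : j ∣ N) :
    (Finset.univ.filter fun z : ZMod N => j ∣ z.val).card = N / j := by
  have hN : N ≠ 0 := NeZero.ne N
  have hj0 : j ≠ 0 := by rintro rfl; exact hN (zero_dvd_iff.1 hj)
  rw [← Finset.card_range (N / j)]
  apply Finset.card_nbij' (i := fun z : ZMod N => z.val / j)
    (j := fun i : ℕ => ((j * i : ℕ) : ZMod N)) (t := Finset.range (N / j))
  · intro z hz
    simp only [Finset.mem_coe, mem_filter, mem_univ, true_and] at hz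
    simp only [Finset.mem_coe, mem_range]
    exact Nat.div_lt_div_of_lt_of_dvd hj (ZMod.val_lt z)
  · intro i hi
    simp only [Finset.mem_coe, mem_range] at hi
    have hlt : j * i < N := (Nat.lt_div_iff_mul_lt' hj i).1 hi
    simp only [Finset.mem_coe, mem_filter, mem_univ, true_and]
    rw [ZMod.val_cast_of_lt hlt]
    exact Dvd.intro i rfl
  · intro z hz
    simp only [Finset.mem_coe, mem_filter, mem_univ, true_and] at hz
    beta_reduce; rw [Nat.mul_div_cancel' hz]
    exact ZMod.natCast_rightInverse z
  · intro i hi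
    simp only [Finset.mem_coe, mem_range] at hi
    have hlt : j * i < N := (Nat.lt_div_iff_mul_lt' hj i).1 hi
    beta_reduce; rw [ZMod.val_cast_of_lt hlt, Nat.mul_div_cancel_left i (Nat.pos_of_ne_zero hj0)]

private lemma aux_pi_eq_zero_iff {ℓ m k : ℕ} [NeZero (ℓ ^ m)] (hkm : k ≤ m) (w : ZMod (ℓ ^ m)) :
    ZMod.castHom (pow_dvd_pow ℓ hkm) (ZMod (ℓ ^ k)) w = 0 ↔ ℓ ^ k ∣ w.val := by
  rw [ZMod.castHom_apply, ← ZMod.natCast_val, ZMod.natCast_eq_zero_iff]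

private lemma aux_card_pi_fiber {ℓ m j : ℕ} (hl : 0 < ℓ) (hjm : j ≤ m) (z : ZMod (ℓ ^ m)) :
    haveI : NeZero (ℓ ^ m) := ⟨(pow_pos hl m).ne'⟩
    (Finset.univ.filter fun a : ZMod (ℓ ^ m) =>
      ZMod.castHom (pow_dvd_pow ℓ hjm) (ZMod (ℓ ^ j)) (a - z) = 0).card = ℓ ^ (m - j) := by
  haveI : NeZero (ℓ ^ m) := ⟨(pow_pos hl m).ne'⟩
  have key : (Finset.univ.filter fun a : ZMod (ℓ ^ m) =>
      ZMod.castHom (pow_dvd_pow ℓ hjm) (ZMod (ℓ ^ j)) (a - z) = 0).card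
      = (Finset.univ.filter fun w : ZMod (ℓ ^ m) => ℓ ^ j ∣ w.val).card := by
    apply Finset.card_nbij' (i := fun a => a - z) (j := fun w => w + z)
    · intro a ha
      simp only [Finset.mem_coe, mem_filter, mem_univ, true_and] at ha ⊢
      exact (aux_pi_eq_zero_iff hjm _).1 ha
    · intro w hw
      simp only [Finset.mem_coe, mem_filter, mem_univ, true_and] at hw ⊢
      rw [add_sub_cancel_right]
      exact (aux_pi_eq_zero_iff hjm _).2 hw
    · intro a _; ring
    · intro w _; ring
  rw [key, aux_card_dvd_val _ _ (pow_dvd_pow ℓ hjm), Nat.pow_div hjm hl]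

private lemma aux_card_roots {ℓ m k : ℕ} (hp : ℓ.Prime) (hkm : k ≤ m) (t d : ZMod (ℓ ^ m)) :
    haveI : NeZero (ℓ ^ m) := ⟨(pow_pos hp.pos m).ne'⟩
    (Finset.univ.filter fun a : ZMod (ℓ ^ m) =>
      ZMod.castHom (pow_dvd_pow ℓ hkm) (ZMod (ℓ ^ k)) (a * (t - a) - d) = 0).card
      ≤ 2 * ℓ ^ (m - k / 2) := by
  haveI : NeZero (ℓ ^ m) := ⟨(pow_pos hp.pos m).ne'⟩
  set π := ZMod.castHom (pow_dvd_pow ℓ hkm) (ZMod (ℓ ^ k)) with hπ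
  rcases (Finset.univ.filter fun a : ZMod (ℓ ^ m) => π (a * (t - a) - d) = 0).eq_empty_or_nonempty
    with he | ⟨r, hr⟩
  · rw [he]; simp
  · have hhm : k / 2 ≤ m := le_trans (Nat.div_le_self k 2) hkm
    have hr' : π (r * (t - r) - d) = 0 := (Finset.mem_filter.1 hr).2
    have hsub : (Finset.univ.filter fun a : ZMod (ℓ ^ m) => π (a * (t - a) - d) = 0)
        ⊆ (Finset.univ.filter fun a : ZMod (ℓ ^ m) =>
            ZMod.castHom (pow_dvd_pow ℓ hhm) (ZMod (ℓ ^ (k / 2))) (a - r) = 0)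
          ∪ (Finset.univ.filter fun a : ZMod (ℓ ^ m) =>
            ZMod.castHom (pow_dvd_pow ℓ hhm) (ZMod (ℓ ^ (k / 2))) (a - (t - r)) = 0) := by
      intro a ha
      have ha' : π (a * (t - a) - d) = 0 := (Finset.mem_filter.1 ha).2
      have key : π ((a - r) * (t - a - r)) = 0 := by
        have hid : (a - r) * (t - a - r) = (a * (t - a) - d) - (r * (t - r) - d) := by ring
        rw [hid, map_sub, ha', hr', sub_zero]
      have hdvd : ℓ ^ k ∣ ((a - r) * (t - a - r)).val := (aux_pi_eq_zero_iff hkm _).1 key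
      have hdvd2 : ℓ ^ k ∣ (a - r).val * (t - a - r).val := by
        have hm1 : (a - r).val * (t - a - r).val
            = ℓ ^ m * ((a - r).val * (t - a - r).val / ℓ ^ m) + ((a - r) * (t - a - r)).val := by
          rw [ZMod.val_mul]
          exact (Nat.div_add_mod _ _).symm
        rw [hm1]
        exact dvd_add (Dvd.dvd.mul_right (pow_dvd_pow ℓ hkm) _) hdvd
      rcases aux_pow_dvd_mul hp (by omega : 2 * (k / 2) ≤ k + 1) hdvd2 with h1 | h2
      · apply Finset.mem_union_left
        simp only [Finset.mem_filter, Finset.mem_univ, true_and]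
        exact (aux_pi_eq_zero_iff hhm _).2 h1
      · apply Finset.mem_union_right
        simp only [Finset.mem_filter, Finset.mem_univ, true_and]
        have hneg : a - (t - r) = -(t - a - r) := by ring
        rw [hneg, map_neg, neg_eq_zero]
        exact (aux_pi_eq_zero_iff hhm _).2 h2
    calc (Finset.univ.filter fun a : ZMod (ℓ ^ m) => π (a * (t - a) - d) = 0).card
        ≤ _ := Finset.card_le_card hsub
      _ ≤ _ + _ := Finset.card_union_le _ _
      _ ≤ 2 * ℓ ^ (m - k / 2) := by
          rw [aux_card_pi_fiber hp.pos hhm, aux_card_pi_fiber hp.pos hhm]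
          omega

private lemma aux_card_solutions {ℓ m : ℕ} (hp : ℓ.Prime) (b X : ZMod (ℓ ^ m)) {k : ℕ}
    (hk : (if b = 0 then m else (b.val).factorization ℓ) = k) :
    haveI : NeZero (ℓ ^ m) := ⟨(pow_pos hp.pos m).ne'⟩
    (Finset.univ.filter fun c : ZMod (ℓ ^ m) => b * c = X).card ≤ ℓ ^ k := by
  haveI : NeZero (ℓ ^ m) := ⟨(pow_pos hp.pos m).ne'⟩
  by_cases hb : b = 0
  · rw [if_pos hb] at hk
    subst hk
    calc (Finset.univ.filter fun c : ZMod (ℓ ^ m) => b * c = X).card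
        ≤ Finset.univ.card := Finset.card_filter_le _ _
      _ = ℓ ^ m := by rw [Finset.card_univ, ZMod.card]
  · rw [if_neg hb] at hk
    have hbv : b.val ≠ 0 := fun h => hb ((ZMod.val_eq_zero b).1 h)
    have hkdvd : ℓ ^ k ∣ b.val := by rw [← hk]; exact Nat.ordProj_dvd _ _
    have hkm : k ≤ m := by
      by_contra hc
      push_neg at hc
      have h1 : ℓ ^ k ≤ b.val := Nat.le_of_dvd (Nat.pos_of_ne_zero hbv) hkdvd
      have h2 : b.val < ℓ ^ m := ZMod.val_lt b
      have h3 : ℓ ^ m < ℓ ^ k := Nat.pow_lt_pow_right hp.one_lt hc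
      omega
    set w := ordCompl[ℓ] b.val with hw
    have hwval : ℓ ^ k * w = b.val := by rw [hw, ← hk]; exact Nat.ordProj_mul_ordCompl_eq_self _ _
    have hwu : IsUnit ((w : ℕ) : ZMod (ℓ ^ m)) := by
      rw [ZMod.isUnit_iff_coprime]
      exact Nat.Coprime.pow_right m
        (Nat.coprime_comm.1 ((Nat.Prime.coprime_iff_not_dvd hp).2 (Nat.not_dvd_ordCompl hp hbv)))
    obtain ⟨u, hu⟩ := hwu
    have hb' : b = ((ℓ : ZMod (ℓ ^ m)) ^ k) * ((w : ℕ) : ZMod (ℓ ^ m)) := by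
      conv_lhs => rw [← ZMod.natCast_rightInverse b, ← hwval]
      push_cast
      ring
    -- reduce to counting solutions of ℓ^k * c' = X
    have step1 : (Finset.univ.filter fun c : ZMod (ℓ ^ m) => b * c = X).card
        ≤ (Finset.univ.filter fun c' : ZMod (ℓ ^ m) => ((ℓ : ZMod (ℓ ^ m)) ^ k) * c' = X).card := by
      apply Finset.card_le_card_of_injOn (fun c => ((w : ℕ) : ZMod (ℓ ^ m)) * c)
      · intro c hc
        simp only [Finset.mem_coe, Finset.mem_filter, Finset.mem_univ, true_and] at hc ⊢
        rw [← hc, hb']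
        ring
      · intro c1 _ c2 _ h
        have := congrArg (fun z => ((u⁻¹ : (ZMod (ℓ ^ m))ˣ) : ZMod (ℓ ^ m)) * z) h
        simpa [← hu, ← mul_assoc] using this
    -- bound the latter
    rcases (Finset.univ.filter fun c' : ZMod (ℓ ^ m) =>
        ((ℓ : ZMod (ℓ ^ m)) ^ k) * c' = X).eq_empty_or_nonempty with he | ⟨c₀, hc₀⟩
    · rw [he] at step1; simpa using le_trans step1 (Nat.zero_le _)
    · have hc₀' : ((ℓ : ZMod (ℓ ^ m)) ^ k) * c₀ = X := (Finset.mem_filter.1 hc₀).2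
      have step2 : (Finset.univ.filter fun c' : ZMod (ℓ ^ m) =>
          ((ℓ : ZMod (ℓ ^ m)) ^ k) * c' = X).card
          ≤ (Finset.univ.filter fun z : ZMod (ℓ ^ m) => ℓ ^ (m - k) ∣ z.val).card := by
        apply Finset.card_le_card_of_injOn (fun c' => c' - c₀)
        · intro c' hc'
          simp only [Finset.mem_coe, Finset.mem_filter, Finset.mem_univ, true_and] at hc' ⊢
          have hz : ((ℓ : ZMod (ℓ ^ m)) ^ k) * (c' - c₀) = 0 := by
            rw [mul_sub, hc', hc₀', sub_self]
          -- convert to val divisibility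
          have hcast : ((ℓ ^ k * (c' - c₀).val : ℕ) : ZMod (ℓ ^ m)) = 0 := by
            push_cast
            rw [ZMod.natCast_rightInverse (c' - c₀)]
            exact hz
          have hdvd : ℓ ^ m ∣ ℓ ^ k * (c' - c₀).val :=
            (ZMod.natCast_eq_zero_iff _ _).1 hcast
          have hsplit : ℓ ^ m = ℓ ^ k * ℓ ^ (m - k) := by
            rw [← pow_add]
            congr 1
            omega
          have hdvd2 : ℓ ^ k * ℓ ^ (m - k) ∣ ℓ ^ k * (c' - c₀).val := hsplit ▸ hdvd
          exact (mul_dvd_mul_iff_left (pow_ne_zero k hp.pos.ne')).1 hdvd2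
        · intro c1 _ c2 _ h
          simpa using congrArg (fun z => z + c₀) h
      have step3 : (Finset.univ.filter fun z : ZMod (ℓ ^ m) => ℓ ^ (m - k) ∣ z.val).card = ℓ ^ k := by
        rw [aux_card_dvd_val _ _ (pow_dvd_pow ℓ (Nat.sub_le m k)),
          Nat.pow_div (Nat.sub_le m k) hp.pos]
        congr 1
        omega
      omega

private lemma aux_geom_sum {ℓ : ℕ} (hl : 2 ≤ ℓ) : ∀ m : ℕ, ∑ i ∈ Finset.range (m + 1), ℓ ^ i ≤ 2 * ℓ ^ m := by
  intro m
  induction m with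
  | zero => simp
  | succ m ih =>
    rw [Finset.sum_range_succ]
    have h1 : ℓ ^ (m + 1) = ℓ ^ m * ℓ := pow_succ ℓ m
    have h2 : 2 * ℓ ^ m ≤ ℓ ^ m * ℓ := by
      have := Nat.mul_le_mul_left (ℓ ^ m) hl
      omega
    omega

private lemma aux_sum_halves {ℓ m : ℕ} (hl : 2 ≤ ℓ) :
    ∑ k ∈ Finset.range (m + 1), ℓ ^ (m - k / 2) ≤ 4 * ℓ ^ m := by
  have h1 : ∀ n : ℕ, ∑ k ∈ Finset.range (2 * n), ℓ ^ (m - k / 2)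
      = 2 * ∑ i ∈ Finset.range n, ℓ ^ (m - i) := by
    intro n
    induction n with
    | zero => simp
    | succ n ih =>
      have e : 2 * (n + 1) = 2 * n + 1 + 1 := by ring
      rw [e, Finset.sum_range_succ, Finset.sum_range_succ, ih, Finset.sum_range_succ]
      have e1 : (2 * n) / 2 = n := by omega
      have e2 : (2 * n + 1) / 2 = n := by omega
      rw [e1, e2]
      ring
  have h2 : ∑ k ∈ Finset.range (m + 1), ℓ ^ (m - k / 2)
      ≤ ∑ k ∈ Finset.range (2 * (m + 1)), ℓ ^ (m - k / 2) := by
    apply Finset.sum_le_sum_of_subset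
    intro x hx
    simp only [Finset.mem_range] at hx ⊢
    omega
  have h3 : ∑ i ∈ Finset.range (m + 1), ℓ ^ (m - i) = ∑ i ∈ Finset.range (m + 1), ℓ ^ i := by
    rw [← Finset.sum_range_reflect]
    apply Finset.sum_congr rfl
    intro i hi
    simp only [Finset.mem_range] at hi
    congr 1
    omega
  calc ∑ k ∈ Finset.range (m + 1), ℓ ^ (m - k / 2)
      ≤ ∑ k ∈ Finset.range (2 * (m + 1)), ℓ ^ (m - k / 2) := h2
    _ = 2 * ∑ i ∈ Finset.range (m + 1), ℓ ^ (m - i) := h1 (m + 1)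
    _ = 2 * ∑ i ∈ Finset.range (m + 1), ℓ ^ i := by rw [h3]
    _ ≤ 2 * (2 * ℓ ^ m) := Nat.mul_le_mul_left _ (aux_geom_sum hl m)
    _ = 4 * ℓ ^ m := by ring

/-- There is an absolute constant `C` such that for every prime `ℓ`, every `m ≥ 1`,
every `t : ZMod (ℓ^m)` and every unit `d`, the number of matrices in `GL₂(ZMod (ℓ^m))`
with trace `t` and determinant `d` is at most `C * ℓ^(2m)`. -/
theorem stmt1 :
    ∃ C : ℕ, 0 < C ∧ ∀ (ℓ m : ℕ), ℓ.Prime → 1 ≤ m →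
      ∀ (t d : ZMod (ℓ ^ m)), IsUnit d →
        Nat.card {A : Matrix (Fin 2) (Fin 2) (ZMod (ℓ ^ m)) //
            IsUnit A.det ∧ A.trace = t ∧ A.det = d} ≤ C * ℓ ^ (2 * m) := by
  classical
  refine ⟨8, by norm_num, ?_⟩
  intro ℓ m hp hm t d hd
  haveI : NeZero (ℓ ^ m) := ⟨(pow_pos hp.pos m).ne'⟩
  -- Step A: inject into triples (a, b, c) with b*c = a*(t-a) - d
  have hA : Nat.card {A : Matrix (Fin 2) (Fin 2) (ZMod (ℓ ^ m)) //
      IsUnit A.det ∧ A.trace = t ∧ A.det = d}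
      ≤ Nat.card {p : ZMod (ℓ ^ m) × ZMod (ℓ ^ m) × ZMod (ℓ ^ m) //
          p.2.1 * p.2.2 = p.1 * (t - p.1) - d} := by
    have hprop : ∀ A : {A : Matrix (Fin 2) (Fin 2) (ZMod (ℓ ^ m)) //
        IsUnit A.det ∧ A.trace = t ∧ A.det = d},
        A.1 0 1 * A.1 1 0 = A.1 0 0 * (t - A.1 0 0) - d := by
      intro A
      obtain ⟨_, htr, hdet⟩ := A.2
      rw [Matrix.trace_fin_two] at htr
      rw [Matrix.det_fin_two] at hdet
      have h11 : A.1 1 1 = t - A.1 0 0 := by linear_combination htr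
      rw [← h11]
      linear_combination -hdet
    apply Nat.card_le_card_of_injective
      (fun A => (⟨(A.1 0 0, A.1 0 1, A.1 1 0), hprop A⟩ :
        {p : ZMod (ℓ ^ m) × ZMod (ℓ ^ m) × ZMod (ℓ ^ m) //
          p.2.1 * p.2.2 = p.1 * (t - p.1) - d}))
    intro A B h
    have hval : (A.1 0 0, A.1 0 1, A.1 1 0) = (B.1 0 0, B.1 0 1, B.1 1 0) :=
      congrArg Subtype.val h
    simp only [Prod.ext_iff] at hval
    obtain ⟨h00, h01, h10⟩ := hval
    have htrA := A.2.2.1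
    have htrB := B.2.2.1
    rw [Matrix.trace_fin_two] at htrA htrB
    have h11 : A.1 1 1 = B.1 1 1 := by
      have : A.1 0 0 + A.1 1 1 = B.1 0 0 + B.1 1 1 := by rw [htrA, htrB]
      rw [h00] at this
      exact add_left_cancel this
    apply Subtype.ext
    apply Matrix.ext
    intro i j
    fin_cases i <;> fin_cases j <;> assumption
  -- identify the count of triples with a Finset card
  have hB : Nat.card {p : ZMod (ℓ ^ m) × ZMod (ℓ ^ m) × ZMod (ℓ ^ m) //
      p.2.1 * p.2.2 = p.1 * (t - p.1) - d}
      = (Finset.univ.filter fun p : ZMod (ℓ ^ m) × ZMod (ℓ ^ m) × ZMod (ℓ ^ m) =>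
          p.2.1 * p.2.2 = p.1 * (t - p.1) - d).card := by
    rw [Nat.card_eq_fintype_card, Fintype.card_subtype]
  -- Step B/C: count the triples
  have hC : (Finset.univ.filter fun p : ZMod (ℓ ^ m) × ZMod (ℓ ^ m) × ZMod (ℓ ^ m) =>
      p.2.1 * p.2.2 = p.1 * (t - p.1) - d).card ≤ 8 * ℓ ^ (2 * m) := by
    set vb : ZMod (ℓ ^ m) → ℕ :=
      fun b => if b = 0 then m else (b.val).factorization ℓ with hvb
    have hvb_le : ∀ b : ZMod (ℓ ^ m), vb b ≤ m := by
      intro b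
      by_cases hb : b = 0
      · simp [hvb, hb]
      · simp only [hvb, if_neg hb]
        have hbv : b.val ≠ 0 := fun h => hb ((ZMod.val_eq_zero b).1 h)
        have h1 : ℓ ^ ((b.val).factorization ℓ) ≤ b.val :=
          Nat.le_of_dvd (Nat.pos_of_ne_zero hbv) (Nat.ordProj_dvd _ _)
        have h2 : b.val < ℓ ^ m := ZMod.val_lt b
        by_contra hc
        push_neg at hc
        have h3 : ℓ ^ m < ℓ ^ ((b.val).factorization ℓ) := Nat.pow_lt_pow_right hp.one_lt hc
        omega
    have hmem : ∀ p ∈ (Finset.univ.filter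
        fun p : ZMod (ℓ ^ m) × ZMod (ℓ ^ m) × ZMod (ℓ ^ m) =>
          p.2.1 * p.2.2 = p.1 * (t - p.1) - d),
        vb p.2.1 ∈ Finset.range (m + 1) := by
      intro p _
      exact Finset.mem_range.2 (Nat.lt_succ_of_le (hvb_le p.2.1))
    rw [Finset.card_eq_sum_card_fiberwise hmem]
    have hterm : ∀ k ∈ Finset.range (m + 1),
        ((Finset.univ.filter fun p : ZMod (ℓ ^ m) × ZMod (ℓ ^ m) × ZMod (ℓ ^ m) =>
          p.2.1 * p.2.2 = p.1 * (t - p.1) - d).filter fun p => vb p.2.1 = k).card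
          ≤ ℓ ^ (m - k / 2) * (2 * ℓ ^ m) := by
      intro k hk
      have hkm : k ≤ m := Nat.lt_succ_iff.1 (Finset.mem_range.1 hk)
      have hmem2 : ∀ p ∈ ((Finset.univ.filter
          fun p : ZMod (ℓ ^ m) × ZMod (ℓ ^ m) × ZMod (ℓ ^ m) =>
            p.2.1 * p.2.2 = p.1 * (t - p.1) - d).filter fun p => vb p.2.1 = k),
          (p.1, p.2.1) ∈ (Finset.univ.filter fun a : ZMod (ℓ ^ m) =>
              ZMod.castHom (pow_dvd_pow ℓ hkm) (ZMod (ℓ ^ k)) (a * (t - a) - d) = 0)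
            ×ˢ (Finset.univ.filter fun b : ZMod (ℓ ^ m) => ℓ ^ k ∣ b.val) := by
        intro p hp'
        simp only [Finset.mem_filter, Finset.mem_univ, true_and] at hp'
        obtain ⟨hP, hv⟩ := hp'
        have hbd : ℓ ^ k ∣ p.2.1.val := by
          by_cases hb : p.2.1 = 0
          · rw [hb, ZMod.val_zero]
            exact dvd_zero _
          · have he : (p.2.1.val).factorization ℓ = k := by simpa [hvb, hb] using hv
            rw [← he]
            exact Nat.ordProj_dvd _ _
        refine Finset.mem_product.2 ⟨?_, ?_⟩
        · simp only [Finset.mem_filter, Finset.mem_univ, true_and]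
          rw [← hP, map_mul, (aux_pi_eq_zero_iff hkm _).2 hbd, zero_mul]
        · simp only [Finset.mem_filter, Finset.mem_univ, true_and]
          exact hbd
      rw [Finset.card_eq_sum_card_fiberwise hmem2]
      have hfib : ∀ q ∈ ((Finset.univ.filter fun a : ZMod (ℓ ^ m) =>
              ZMod.castHom (pow_dvd_pow ℓ hkm) (ZMod (ℓ ^ k)) (a * (t - a) - d) = 0)
            ×ˢ (Finset.univ.filter fun b : ZMod (ℓ ^ m) => ℓ ^ k ∣ b.val)),
          (((Finset.univ.filter
            fun p : ZMod (ℓ ^ m) × ZMod (ℓ ^ m) × ZMod (ℓ ^ m) =>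
              p.2.1 * p.2.2 = p.1 * (t - p.1) - d).filter
                fun p => vb p.2.1 = k).filter fun p => (p.1, p.2.1) = q).card ≤ ℓ ^ k := by
        intro q _
        by_cases hvq : vb q.2 = k
        · have hstep : (((Finset.univ.filter
              fun p : ZMod (ℓ ^ m) × ZMod (ℓ ^ m) × ZMod (ℓ ^ m) =>
                p.2.1 * p.2.2 = p.1 * (t - p.1) - d).filter
                  fun p => vb p.2.1 = k).filter fun p => (p.1, p.2.1) = q).card
              ≤ (Finset.univ.filter fun c : ZMod (ℓ ^ m) =>
                  q.2 * c = q.1 * (t - q.1) - d).card := by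
            apply Finset.card_le_card_of_injOn (fun p => p.2.2)
            · intro p hp'
              simp only [Finset.mem_coe, Finset.mem_filter, Finset.mem_univ, true_and] at hp' ⊢
              obtain ⟨⟨hP, _⟩, hq⟩ := hp'
              simp only [Prod.ext_iff] at hq
              obtain ⟨hq1, hq2⟩ := hq
              rw [← hq1, ← hq2]
              exact hP
            · intro p1 hp1 p2 hp2 hcc
              simp only [Finset.coe_filter, Set.mem_setOf_eq] at hp1 hp2
              obtain ⟨_, hq1⟩ := hp1
              obtain ⟨_, hq2⟩ := hp2
              simp only [Prod.ext_iff] at hq1 hq2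
              have : p1.2 = p2.2 := Prod.ext (hq1.2.trans hq2.2.symm) hcc
              exact Prod.ext (hq1.1.trans hq2.1.symm) this
          refine le_trans hstep ?_
          exact aux_card_solutions hp q.2 (q.1 * (t - q.1) - d) hvq
        · have hempty : (((Finset.univ.filter
              fun p : ZMod (ℓ ^ m) × ZMod (ℓ ^ m) × ZMod (ℓ ^ m) =>
                p.2.1 * p.2.2 = p.1 * (t - p.1) - d).filter
                  fun p => vb p.2.1 = k).filter fun p => (p.1, p.2.1) = q) = ∅ := by
            apply Finset.eq_empty_of_forall_notMem
            intro p hp'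
            simp only [Finset.mem_coe, Finset.mem_filter, Finset.mem_univ, true_and] at hp'
            obtain ⟨⟨_, hv⟩, hq⟩ := hp'
            simp only [Prod.ext_iff] at hq
            rw [hq.2] at hv
            exact hvq hv
          rw [hempty]
          simp
      calc ∑ q ∈ ((Finset.univ.filter fun a : ZMod (ℓ ^ m) =>
              ZMod.castHom (pow_dvd_pow ℓ hkm) (ZMod (ℓ ^ k)) (a * (t - a) - d) = 0)
            ×ˢ (Finset.univ.filter fun b : ZMod (ℓ ^ m) => ℓ ^ k ∣ b.val)),
            (((Finset.univ.filter
            fun p : ZMod (ℓ ^ m) × ZMod (ℓ ^ m) × ZMod (ℓ ^ m) =>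
              p.2.1 * p.2.2 = p.1 * (t - p.1) - d).filter
                fun p => vb p.2.1 = k).filter fun p => (p.1, p.2.1) = q).card
          ≤ ∑ q ∈ ((Finset.univ.filter fun a : ZMod (ℓ ^ m) =>
              ZMod.castHom (pow_dvd_pow ℓ hkm) (ZMod (ℓ ^ k)) (a * (t - a) - d) = 0)
            ×ˢ (Finset.univ.filter fun b : ZMod (ℓ ^ m) => ℓ ^ k ∣ b.val)), ℓ ^ k :=
            Finset.sum_le_sum hfib
        _ = ((Finset.univ.filter fun a : ZMod (ℓ ^ m) =>
              ZMod.castHom (pow_dvd_pow ℓ hkm) (ZMod (ℓ ^ k)) (a * (t - a) - d) = 0).card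
            * (Finset.univ.filter fun b : ZMod (ℓ ^ m) => ℓ ^ k ∣ b.val).card) * ℓ ^ k := by
            rw [Finset.sum_const, smul_eq_mul, Finset.card_product]
        _ ≤ (2 * ℓ ^ (m - k / 2) * ℓ ^ (m - k)) * ℓ ^ k := by
            apply Nat.mul_le_mul_right
            have h1 := aux_card_roots hp hkm t d
            have h2 : (Finset.univ.filter fun b : ZMod (ℓ ^ m) => ℓ ^ k ∣ b.val).card
                = ℓ ^ (m - k) := by
              rw [aux_card_dvd_val _ _ (pow_dvd_pow ℓ hkm), Nat.pow_div hkm hp.pos]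
            rw [h2]
            exact Nat.mul_le_mul_right _ h1
        _ = ℓ ^ (m - k / 2) * (2 * ℓ ^ m) := by
            have : ℓ ^ (m - k) * ℓ ^ k = ℓ ^ m := by
              rw [← pow_add, Nat.sub_add_cancel hkm]
            rw [mul_assoc, this]
            ring
    calc ∑ k ∈ Finset.range (m + 1),
        ((Finset.univ.filter fun p : ZMod (ℓ ^ m) × ZMod (ℓ ^ m) × ZMod (ℓ ^ m) =>
          p.2.1 * p.2.2 = p.1 * (t - p.1) - d).filter fun p => vb p.2.1 = k).card
        ≤ ∑ k ∈ Finset.range (m + 1), ℓ ^ (m - k / 2) * (2 * ℓ ^ m) :=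
          Finset.sum_le_sum hterm
      _ = (∑ k ∈ Finset.range (m + 1), ℓ ^ (m - k / 2)) * (2 * ℓ ^ m) := by
          rw [Finset.sum_mul]
      _ ≤ (4 * ℓ ^ m) * (2 * ℓ ^ m) :=
          Nat.mul_le_mul_right _ (aux_sum_halves hp.two_le)
      _ = 8 * ℓ ^ (2 * m) := by
          rw [show 2 * m = m + m by ring, pow_add]
          ring
  omega
end

section
/- Let ℓ be a prime, m ≥ 1, t ∈ Z and d ∈ Z with (d, ℓ) = 1. For 0 ≤ j ≤ m, let Z_{ℓ^j} = {a ∈ {0,1,...,ℓᵐ−1} : ℓʲ divides a² − a·t + d but ℓ^{j+1} does not (with no upper divisibility condition when j = m)}. Then |Z_{ℓ^j}| ≤ 16·ℓ^{m − j/2} for all 0 ≤ j ≤ m. -/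
set_option linter.unusedVariables false

section ProofAux

/-- `ℓ`-adic valuation of an integer via factorization of its absolute value. -/
def pv (ℓ : ℕ) (z : ℤ) : ℕ := z.natAbs.factorization ℓ

lemma pow_pv_dvd (ℓ : ℕ) (z : ℤ) : (ℓ : ℤ) ^ pv ℓ z ∣ z := by
  have h : (ℓ ^ pv ℓ z : ℕ) ∣ z.natAbs := Nat.ordProj_dvd _ _
  have h2 : ((ℓ ^ pv ℓ z : ℕ) : ℤ) ∣ (z.natAbs : ℤ) := Int.natCast_dvd_natCast.mpr h
  rw [Int.dvd_natAbs] at h2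
  exact_mod_cast h2

lemma le_pv {ℓ : ℕ} (hℓ : ℓ.Prime) {z : ℤ} (hz : z ≠ 0) {k : ℕ}
    (h : (ℓ : ℤ) ^ k ∣ z) : k ≤ pv ℓ z := by
  have h2 : ((ℓ ^ k : ℕ) : ℤ) ∣ (z.natAbs : ℤ) := by
    rw [Int.dvd_natAbs]; exact_mod_cast h
  have h3 : ℓ ^ k ∣ z.natAbs := Int.natCast_dvd_natCast.mp h2
  exact (Nat.Prime.pow_dvd_iff_le_factorization hℓ (Int.natAbs_ne_zero.mpr hz)).mp h3

lemma pv_mul {ℓ : ℕ} (hℓ : ℓ.Prime) {a b : ℤ} (ha : a ≠ 0) (hb : b ≠ 0) :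
    pv ℓ (a * b) = pv ℓ a + pv ℓ b := by
  unfold pv
  rw [Int.natAbs_mul, Nat.factorization_mul (Int.natAbs_ne_zero.mpr ha)
    (Int.natAbs_ne_zero.mpr hb)]
  simp

lemma pv_two_le {ℓ : ℕ} (hℓ : ℓ.Prime) : pv ℓ 2 ≤ if ℓ = 2 then 1 else 0 := by
  unfold pv
  rw [show ((2:ℤ).natAbs) = 2 from rfl, Nat.Prime.factorization Nat.prime_two]
  by_cases h : ℓ = 2 <;> simp [Finsupp.single_apply, h, eq_comm]

lemma split_dvd {ℓ : ℕ} (hℓ : ℓ.Prime) {x y : ℤ} {j W : ℕ}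
    (hW : ¬ (ℓ : ℤ) ^ (W + 1) ∣ 2 * x)
    (hxy : (ℓ : ℤ) ^ j ∣ (x - y) * (x + y)) :
    (ℓ : ℤ) ^ (j - W) ∣ x - y ∨ (ℓ : ℤ) ^ (j - W) ∣ x + y := by
  rcases eq_or_ne (x - y) 0 with h1 | h1
  · exact Or.inl (h1 ▸ dvd_zero _)
  rcases eq_or_ne (x + y) 0 with h2 | h2
  · exact Or.inr (h2 ▸ dvd_zero _)
  have hrq : j ≤ pv ℓ (x - y) + pv ℓ (x + y) := by
    have := le_pv hℓ (mul_ne_zero h1 h2) hxy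
    rwa [pv_mul hℓ h1 h2] at this
  have hmin : pv ℓ (x - y) ≤ W ∨ pv ℓ (x + y) ≤ W := by
    by_contra hc
    push_neg at hc
    apply hW
    have d1 : (ℓ:ℤ)^(W+1) ∣ x - y :=
      dvd_trans (pow_dvd_pow _ (by omega)) (pow_pv_dvd ℓ _)
    have d2 : (ℓ:ℤ)^(W+1) ∣ x + y :=
      dvd_trans (pow_dvd_pow _ (by omega)) (pow_pv_dvd ℓ _)
    have h3 : (ℓ:ℤ)^(W+1) ∣ (x - y) + (x + y) := dvd_add d1 d2
    have e : (x - y) + (x + y) = 2*x := by ring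
    rwa [e] at h3
  rcases hmin with h | h
  · exact Or.inr (dvd_trans (pow_dvd_pow _ (by omega)) (pow_pv_dvd ℓ _))
  · exact Or.inl (dvd_trans (pow_dvd_pow _ (by omega)) (pow_pv_dvd ℓ _))

lemma dvd_of_dvd_two_mul {ℓ : ℕ} (hℓ : ℓ.Prime) {n : ℕ} {z : ℤ}
    (h : (ℓ:ℤ)^n ∣ 2 * z) :
    (ℓ:ℤ)^(n - (if ℓ = 2 then 1 else 0)) ∣ z := by
  split_ifs with h2
  · subst h2
    rcases Nat.eq_zero_or_pos n with rfl | hn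
    · simpa using one_dvd z
    · have e : ((2:ℕ):ℤ)^n = 2 * 2^(n-1) := by
        rw [← pow_succ']
        congr 1
        omega
      rw [e] at h
      have h3 : (2:ℤ)^(n-1) ∣ z := by
        have := (mul_dvd_mul_iff_left (two_ne_zero (α := ℤ))).mp h
        exact this
      exact_mod_cast h3
  · have hc : IsCoprime ((ℓ:ℤ)^n) 2 := by
      apply IsCoprime.pow_left
      exact_mod_cast Nat.isCoprime_iff_coprime.mpr
        ((Nat.coprime_primes hℓ Nat.prime_two).mpr h2)
    simpa using hc.dvd_of_dvd_mul_left h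

lemma count_class {ℓ : ℕ} (hℓ2 : 2 ≤ ℓ) {m K : ℕ} (hK : K ≤ m) (c : ℤ) :
    ((Finset.range (ℓ ^ m)).filter (fun a : ℕ => (ℓ : ℤ) ^ K ∣ ((a : ℤ) - c))).card
      ≤ ℓ ^ (m - K) := by
  have hpos : 0 < ℓ ^ K := pow_pos (by omega) _
  rw [← Finset.card_range (ℓ ^ (m - K))]
  apply Finset.card_le_card_of_injOn (fun a => a / ℓ ^ K)
  · intro a ha
    simp only [Finset.mem_coe, Finset.mem_filter, Finset.mem_range] at ha ⊢
    rw [Nat.div_lt_iff_lt_mul hpos, ← pow_add, Nat.sub_add_cancel hK]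
    exact ha.1
  · intro a ha b hb hab
    simp only [Finset.coe_filter, Set.mem_setOf_eq, Finset.mem_range] at ha hb
    have hd : (ℓ:ℤ)^K ∣ (a : ℤ) - b := by
      have h3 := dvd_sub ha.2 hb.2
      have e : ((a:ℤ) - c) - ((b:ℤ) - c) = (a:ℤ) - b := by ring
      rwa [e] at h3
    have hmodZ : (a : ℤ) % (ℓ^K : ℕ) = (b : ℤ) % (ℓ^K : ℕ) := by
      have hd2 : ((ℓ^K : ℕ) : ℤ) ∣ (b:ℤ) - (a:ℤ) := by
        push_cast
        have h4 := dvd_sub hb.2 ha.2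
        have e : ((b:ℤ) - c) - ((a:ℤ) - c) = (b:ℤ) - a := by ring
        rwa [e] at h4
      exact Int.modEq_iff_dvd.mpr hd2
    have hmod : a % ℓ ^ K = b % ℓ ^ K := by
      have := hmodZ
      rw [← Int.natCast_mod, ← Int.natCast_mod] at this
      exact_mod_cast this
    calc a = ℓ^K * (a / ℓ^K) + a % ℓ^K := (Nat.div_add_mod _ _).symm
      _ = ℓ^K * (b / ℓ^K) + b % ℓ^K := by rw [show a / ℓ ^ K = b / ℓ ^ K from hab, hmod]
      _ = b := Nat.div_add_mod _ _

lemma caseA_cover {ℓ : ℕ} (hℓ : ℓ.Prime) {h e K : ℕ} (t : ℤ)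
    (he : e = if ℓ = 2 then 1 else 0) (hK : K ≤ h - e)
    {a₀ a : ℤ} (ha₀ : (ℓ:ℤ)^h ∣ 2*a₀ - t) (ha : (ℓ:ℤ)^h ∣ 2*a - t) :
    (ℓ:ℤ)^K ∣ a - a₀ := by
  have h1 : (ℓ:ℤ)^h ∣ 2*(a - a₀) := by
    have e1 : 2*(a - a₀) = (2*a - t) - (2*a₀ - t) := by ring
    rw [e1]; exact dvd_sub ha ha₀
  have h2 := dvd_of_dvd_two_mul hℓ h1
  rw [← he] at h2
  exact dvd_trans (pow_dvd_pow _ hK) h2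

lemma caseB_cover {ℓ : ℕ} (hℓ : ℓ.Prime) {j h e K : ℕ} (t d : ℤ)
    (he : e = if ℓ = 2 then 1 else 0) (hh : h = (j+1)/2) (hK : K = h - 2*e)
    {b₀ a : ℤ}
    (hfb : (ℓ:ℤ)^j ∣ (b₀^2 - b₀*t + d))
    (hfa : (ℓ:ℤ)^j ∣ (a^2 - a*t + d))
    (hb₀ : ¬ (ℓ:ℤ)^h ∣ 2*b₀ - t) :
    (ℓ:ℤ)^K ∣ a - b₀ ∨ (ℓ:ℤ)^K ∣ a - (t - b₀) := by
  set x : ℤ := 2*b₀ - t with hx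
  set y : ℤ := 2*a - t with hy
  have hxne : x ≠ 0 := by
    intro h0
    exact hb₀ (h0 ▸ dvd_zero _)
  have h2x : 2*x ≠ 0 := mul_ne_zero two_ne_zero hxne
  set W : ℕ := pv ℓ (2*x) with hWdef
  have hW : ¬ (ℓ:ℤ)^(W+1) ∣ 2*x := fun hdvd => by
    have := le_pv hℓ h2x hdvd
    omega
  -- h ≥ 1
  have hone : 1 ≤ h := by
    by_contra hc
    push_neg at hc
    interval_cases h
    · exact hb₀ (one_dvd _)
  -- pv x < h
  have hvx : pv ℓ x < h := by
    by_contra hc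
    push_neg at hc
    exact hb₀ (dvd_trans (pow_dvd_pow _ hc) (pow_pv_dvd ℓ x))
  have hWle : W ≤ e + (h - 1) := by
    have h1 : W = pv ℓ 2 + pv ℓ x := pv_mul hℓ two_ne_zero hxne
    have h2 : pv ℓ 2 ≤ e := he ▸ pv_two_le hℓ
    omega
  have hxy : (ℓ:ℤ)^j ∣ (x - y) * (x + y) := by
    have e1 : (x - y) * (x + y) =
        4*(b₀^2 - b₀*t + d) - 4*(a^2 - a*t + d) := by
      rw [hx, hy]; ring
    rw [e1]
    exact dvd_sub (Dvd.dvd.mul_left hfb 4) (Dvd.dvd.mul_left hfa 4)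
  have he1 : e ≤ 1 := by rw [he]; split <;> omega
  rcases split_dvd hℓ hW hxy with hc | hc
  · left
    have h1 : (ℓ:ℤ)^(j - W) ∣ 2*(b₀ - a) := by
      have e1 : 2*(b₀ - a) = x - y := by rw [hx, hy]; ring
      rwa [e1]
    have h2 := dvd_of_dvd_two_mul hℓ h1
    rw [← he] at h2
    have h3 : (ℓ:ℤ)^K ∣ b₀ - a := dvd_trans (pow_dvd_pow _ (by omega)) h2
    have e2 : a - b₀ = -(b₀ - a) := by ring
    rw [e2]
    exact h3.neg_right
  · right
    have h1 : (ℓ:ℤ)^(j - W) ∣ 2*(a - (t - b₀)) := by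
      have e1 : 2*(a - (t - b₀)) = x + y := by rw [hx, hy]; ring
      rwa [e1]
    have h2 := dvd_of_dvd_two_mul hℓ h1
    rw [← he] at h2
    exact dvd_trans (pow_dvd_pow _ (by omega)) h2

end ProofAux

/-- For a prime `ℓ`, `m ≥ 1`, integers `t, d` with `gcd(d, ℓ) = 1`, and `0 ≤ j ≤ m`,
the set `Z_{ℓ^j}` of `a ∈ {0, …, ℓ^m - 1}` with `ℓ^j ∣ a² - a t + d` and (when `j < m`)
`ℓ^(j+1) ∤ a² - a t + d` has at most `16 ℓ^(m - j/2)` elements. -/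
theorem stmt2 (ℓ : ℕ) (hℓ : ℓ.Prime) (m : ℕ) (hm : 1 ≤ m) (t d : ℤ)
    (hd : IsCoprime d (ℓ : ℤ)) (j : ℕ) (hj : j ≤ m) :
    (({a : ℕ | a < ℓ ^ m ∧ ((ℓ : ℤ) ^ j ∣ ((a : ℤ) ^ 2 - a * t + d)) ∧
        (j < m → ¬ ((ℓ : ℤ) ^ (j + 1) ∣ ((a : ℤ) ^ 2 - a * t + d)))}).ncard : ℝ) ≤
      16 * (ℓ : ℝ) ^ ((m : ℝ) - (j : ℝ) / 2) := by
  classical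
  have hℓ2 : 2 ≤ ℓ := hℓ.two_le
  set e : ℕ := if ℓ = 2 then 1 else 0 with he
  set h : ℕ := (j+1)/2 with hh
  set K : ℕ := h - 2*e with hKdef
  have he1 : e ≤ 1 := by rw [he]; split <;> omega
  have hKm : K ≤ m := by omega
  set T : Finset ℕ := (Finset.range (ℓ^m)).filter
    (fun a : ℕ => (ℓ:ℤ)^j ∣ ((a:ℤ)^2 - a*t + d)) with hT
  -- step 1 : ncard ≤ T.card
  have step1 : ({a : ℕ | a < ℓ ^ m ∧ ((ℓ : ℤ) ^ j ∣ ((a : ℤ) ^ 2 - a * t + d)) ∧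
        (j < m → ¬ ((ℓ : ℤ) ^ (j + 1) ∣ ((a : ℤ) ^ 2 - a * t + d)))}).ncard ≤ T.card := by
    rw [← Set.ncard_coe_finset T]
    apply Set.ncard_le_ncard _ T.finite_toSet
    intro a ha
    simp only [Set.mem_setOf_eq] at ha
    simp only [hT, Finset.coe_filter, Set.mem_setOf_eq, Finset.mem_range]
    exact ⟨ha.1, ha.2.1⟩
  -- step 2 : covering
  have key : ∃ c₁ c₂ c₃ : ℤ, ∀ a ∈ T,
      (ℓ:ℤ)^K ∣ (a:ℤ) - c₁ ∨ (ℓ:ℤ)^K ∣ (a:ℤ) - c₂ ∨ (ℓ:ℤ)^K ∣ (a:ℤ) - c₃ := by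
    have hmemT : ∀ a ∈ T, (ℓ:ℤ)^j ∣ ((a:ℤ)^2 - a*t + d) := by
      intro a ha
      exact (Finset.mem_filter.mp ha).2
    have hKA : K ≤ h - e := by omega
    by_cases hA : ∃ a, a ∈ T ∧ (ℓ:ℤ)^h ∣ 2*(a:ℤ) - t
    · obtain ⟨a₀, ha₀T, ha₀⟩ := hA
      by_cases hB : ∃ b, b ∈ T ∧ ¬ (ℓ:ℤ)^h ∣ 2*(b:ℤ) - t
      · obtain ⟨b₀, hb₀T, hb₀⟩ := hB
        refine ⟨(a₀:ℤ), (b₀:ℤ), t - b₀, fun a haT => ?_⟩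
        by_cases hca : (ℓ:ℤ)^h ∣ 2*(a:ℤ) - t
        · exact Or.inl (caseA_cover hℓ t he hKA ha₀ hca)
        · exact Or.inr (caseB_cover hℓ t d he hh hKdef
            (hmemT b₀ hb₀T) (hmemT a haT) hb₀)
      · push_neg at hB
        refine ⟨(a₀:ℤ), 0, 0, fun a haT => ?_⟩
        exact Or.inl (caseA_cover hℓ t he hKA ha₀ (hB a haT))
    · push_neg at hA
      by_cases hB : ∃ b, b ∈ T ∧ ¬ (ℓ:ℤ)^h ∣ 2*(b:ℤ) - t
      · obtain ⟨b₀, hb₀T, hb₀⟩ := hB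
        refine ⟨0, (b₀:ℤ), t - b₀, fun a haT => ?_⟩
        exact Or.inr (caseB_cover hℓ t d he hh hKdef
          (hmemT b₀ hb₀T) (hmemT a haT) hb₀)
      · push_neg at hB
        exact ⟨0, 0, 0, fun a haT => absurd (hB a haT) (fun hc => hA a haT hc)⟩
  obtain ⟨c₁, c₂, c₃, hcover⟩ := key
  -- step 3 : T.card ≤ 3 * ℓ^(m-K)
  have step3 : T.card ≤ 3 * ℓ^(m-K) := by
    have hsub : T ⊆ ((Finset.range (ℓ^m)).filter (fun a : ℕ => (ℓ:ℤ)^K ∣ ((a:ℤ) - c₁)))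
        ∪ (((Finset.range (ℓ^m)).filter (fun a : ℕ => (ℓ:ℤ)^K ∣ ((a:ℤ) - c₂)))
        ∪ ((Finset.range (ℓ^m)).filter (fun a : ℕ => (ℓ:ℤ)^K ∣ ((a:ℤ) - c₃)))) := by
      intro a ha
      have hrange : a ∈ Finset.range (ℓ^m) := (Finset.mem_filter.mp ha).1
      rcases hcover a ha with hcc | hcc | hcc <;>
        simp [Finset.mem_union, Finset.mem_filter, hrange, hcc]
    calc T.card ≤ _ := Finset.card_le_card hsub
      _ ≤ _ + _ := Finset.card_union_le _ _
      _ ≤ ℓ^(m-K) + (_ + _) :=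
          add_le_add (count_class hℓ2 hKm c₁) (Finset.card_union_le _ _)
      _ ≤ ℓ^(m-K) + (ℓ^(m-K) + ℓ^(m-K)) := by
          exact add_le_add le_rfl
            (add_le_add (count_class hℓ2 hKm c₂) (count_class hℓ2 hKm c₃))
      _ = 3 * ℓ^(m-K) := by ring
  -- step 4 : real estimate
  have hlR : (1:ℝ) ≤ (ℓ:ℝ) := by exact_mod_cast hℓ.one_lt.le
  have hlpos : (0:ℝ) < (ℓ:ℝ) := by positivity
  have hexp : ((m - K : ℕ) : ℝ) ≤ (m:ℝ) - (j:ℝ)/2 + 2*(e:ℝ) := by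
    have hjK : (j : ℕ) ≤ 2*K + 4*e := by omega
    have hcast : ((m - K:ℕ):ℝ) = (m:ℝ) - (K:ℝ) := by
      rw [Nat.cast_sub hKm]
    rw [hcast]
    have : (j:ℝ) ≤ 2*(K:ℝ) + 4*(e:ℝ) := by exact_mod_cast hjK
    linarith
  have hpow1 : ((ℓ:ℕ)^(m-K) : ℝ) ≤ (ℓ:ℝ)^((m:ℝ) - (j:ℝ)/2 + 2*(e:ℝ)) := by
    rw [show ((ℓ:ℕ)^(m-K) : ℝ) = (ℓ:ℝ)^((m-K : ℕ)) by push_cast; ring,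
      ← Real.rpow_natCast (ℓ:ℝ) (m-K)]
    exact Real.rpow_le_rpow_of_exponent_le hlR hexp
  have hsplit : (ℓ:ℝ)^((m:ℝ) - (j:ℝ)/2 + 2*(e:ℝ)) =
      (ℓ:ℝ)^((m:ℝ) - (j:ℝ)/2) * (ℓ:ℝ)^(2*(e:ℝ)) := by
    rw [← Real.rpow_add hlpos]
  have hfac : (ℓ:ℝ)^(2*(e:ℝ)) ≤ 16/3 := by
    by_cases h2 : ℓ = 2
    · have he2 : e = 1 := by rw [he]; simp [h2]
      rw [h2, he2]
      norm_num
    · have he0 : e = 0 := by rw [he]; simp [h2]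
      rw [he0]
      norm_num
  have hXpos : (0:ℝ) < (ℓ:ℝ)^((m:ℝ) - (j:ℝ)/2) := Real.rpow_pos_of_pos hlpos _
  calc (({a : ℕ | a < ℓ ^ m ∧ ((ℓ : ℤ) ^ j ∣ ((a : ℤ) ^ 2 - a * t + d)) ∧
        (j < m → ¬ ((ℓ : ℤ) ^ (j + 1) ∣ ((a : ℤ) ^ 2 - a * t + d)))}).ncard : ℝ)
      ≤ (T.card : ℝ) := by exact_mod_cast step1
    _ ≤ 3 * ((ℓ:ℕ)^(m-K) : ℝ) := by exact_mod_cast step3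
    _ ≤ 3 * ((ℓ:ℝ)^((m:ℝ) - (j:ℝ)/2) * (ℓ:ℝ)^(2*(e:ℝ))) := by
        rw [← hsplit]; linarith
    _ ≤ 3 * ((ℓ:ℝ)^((m:ℝ) - (j:ℝ)/2) * (16/3)) := by
        apply mul_le_mul_of_nonneg_left _ (by norm_num)
        exact mul_le_mul_of_nonneg_left hfac hXpos.le
    _ = 16 * (ℓ:ℝ)^((m:ℝ) - (j:ℝ)/2) := by ring
end

section
/- Let n ≥ 2 be even and m ≥ 1. Let P_{n/2}(m) be the set of tuples s = (s₁,...,s_{n/2}) of nonnegative integers with s₁ ≥ s₂ ≥ ... ≥ s_{n/2} and s₁ + ... + s_{n/2} = m. Then min over s ∈ P_{n/2}(m) of s₁ + ⌊(s₂+1)/2⌋ is at least 3m/n. -/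
lemma aux13 (k m : ℕ) (hk : 1 ≤ k) (s : Fin k → ℕ) (hanti : Antitone s)
    (hsum : ∑ i, s i = m) (h0 : 0 < k) (h1 : 1 % k < k) :
    3 * m ≤ 2 * k * (s ⟨0, h0⟩ + (s ⟨1 % k, h1⟩ + 1) / 2) := by
  rcases eq_or_lt_of_le hk with h | hk2
  · -- k = 1
    subst h
    have hsum1 : s ⟨0, h0⟩ = m := by
      rw [← hsum, Fin.sum_univ_one]
      congr
    have h10 : (1 % 1) = 0 := rfl
    simp only [h10] at *
    omega
  · -- k ≥ 2
    have hidx : (1 % k) = 1 := Nat.mod_eq_of_lt hk2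
    set a := s ⟨0, h0⟩ with ha
    set b := s ⟨1 % k, h1⟩ with hb
    set t := (b + 1) / 2 with htt
    have ht2 : b ≤ 2 * t := by omega
    have hba : b ≤ a := by
      apply hanti
      simp [Fin.le_def, hidx]
    have hmb : m ≤ a + (k - 1) * b := by
      rw [← hsum]
      rw [show ∑ i, s i = s ⟨0, h0⟩ +
          ∑ i ∈ (Finset.univ.erase ⟨0, h0⟩), s i from
        (Finset.add_sum_erase _ _ (Finset.mem_univ _)).symm]
      apply Nat.add_le_add_left
      calc ∑ i ∈ (Finset.univ.erase (⟨0, h0⟩ : Fin k)), s i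
          ≤ ∑ _i ∈ (Finset.univ.erase (⟨0, h0⟩ : Fin k)), b := by
            apply Finset.sum_le_sum
            intro i hi
            apply hanti
            simp only [Finset.mem_erase, Finset.mem_univ, and_true] at hi
            simp only [Fin.le_def, hidx]
            have : i.val ≠ 0 := fun h => hi (Fin.ext h)
            omega
        _ = (k - 1) * b := by
            rw [Finset.sum_const, smul_eq_mul,
              Finset.card_erase_of_mem (Finset.mem_univ _)]
            simp
    zify [hk] at hmb hba ht2 ⊢
    nlinarith [mul_nonneg (by push_cast; omega : (0:ℤ) ≤ 2 * (k:ℤ) - 3)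
      (by omega : (0:ℤ) ≤ (a:ℤ) - b),
      mul_le_mul_of_nonneg_left ht2 (by positivity : (0:ℤ) ≤ (k:ℤ))]

/-- Let `n ≥ 2` be even and `m ≥ 1`. For any nonincreasing tuple `s` of `n/2`
nonnegative integers summing to `m`, one has `s₁ + ⌊(s₂ + 1)/2⌋ ≥ 3m/n`. -/
theorem stmt13 (n m : ℕ) (hn : Even n) (hn2 : 2 ≤ n) (hm : 1 ≤ m)
    (s : Fin (n / 2) → ℕ) (hanti : Antitone s) (hsum : ∑ i, s i = m) :
    (3 * (m : ℚ)) / n ≤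
      ((s ⟨0, by omega⟩ + (s ⟨1 % (n / 2), Nat.mod_lt _ (by omega)⟩ + 1) / 2 : ℕ) : ℚ) := by
  have h2 : n % 2 = 0 := Nat.even_iff.mp hn
  have hk : 1 ≤ n / 2 := by omega
  have key := aux13 (n / 2) m hk s hanti hsum (by omega) (Nat.mod_lt _ (by omega))
  have hnpos : (0:ℚ) < n := by positivity
  rw [div_le_iff₀ hnpos]
  have hn' : (n : ℚ) = 2 * (n / 2 : ℕ) := by
    exact_mod_cast (by omega : n = 2 * (n / 2))
  rw [hn']
  calc (3 : ℚ) * m = ((3 * m : ℕ) : ℚ) := by push_cast; ring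
    _ ≤ ((2 * (n / 2) * (s ⟨0, by omega⟩ +
        (s ⟨1 % (n / 2), Nat.mod_lt _ (by omega)⟩ + 1) / 2) : ℕ) : ℚ) := by
        exact_mod_cast key
    _ = _ := by push_cast; ring
end

section
/- Let n ≥ 4 be even and write m = (n/2)·q + i with 0 ≤ i < n/2. Then the minimum over partitions s ∈ P_{n/2}(m) (nonincreasing tuples of n/2 nonnegative integers summing to m) of s₁ + ⌊(s₂+1)/2⌋ is attained at the partition with i parts equal to q+1 and n/2 − i parts equal to q. -/
lemma stmt14_aux (k q i a b : ℕ) (hk : 2 ≤ k) (hi : i < k) (hab : b ≤ a)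
    (hbound : k * q + i ≤ a + (k - 1) * b) :
    ((if (0 : ℕ) < i then q + 1 else q) + ((if (1 : ℕ) < i then q + 1 else q) + 1) / 2) ≤
      a + (b + 1) / 2 := by
  rcases le_or_gt b q with hbq | hbq
  · -- b ≤ q : get a ≥ q + i + (q - b)
    set k1 := k - 1 with hk1
    have hk1' : k1 + 1 = k := by omega
    set c := q - b with hc
    have hbc : b + c = q := by omega
    have p1 : k1 * q = k1 * b + k1 * c := by rw [← Nat.mul_add, hbc]
    have p2 : k * q = k1 * q + q := by rw [← hk1']; ring
    have p3 : c ≤ k1 * c := Nat.le_mul_of_pos_left c (by omega)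
    have hA : q + i + c ≤ a := by
      have := hbound
      rw [p2, p1] at this
      omega
    split_ifs <;> omega
  · have : q + 1 ≤ b := hbq
    split_ifs <;> omega

/-- Let `n ≥ 4` be even and `m = (n/2)·q + i` with `0 ≤ i < n/2`. Then the minimum of
`s₁ + ⌊(s₂+1)/2⌋` over nonincreasing tuples `s` of `n/2` nonnegative integers summing
to `m` is attained at the tuple with `i` parts equal to `q+1` and `n/2 - i` parts `q`. -/
theorem stmt14 (n m q i : ℕ) (hn : Even n) (hn4 : 4 ≤ n) (hi : i < n / 2)
    (hm : m = (n / 2) * q + i) :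
    Antitone (fun j : Fin (n / 2) => if (j : ℕ) < i then q + 1 else q) ∧
    (∑ j : Fin (n / 2), (if (j : ℕ) < i then q + 1 else q)) = m ∧
    ∀ s : Fin (n / 2) → ℕ, Antitone s → (∑ j, s j = m) →
      ((if (0 : ℕ) < i then q + 1 else q) +
          ((if (1 : ℕ) < i then q + 1 else q) + 1) / 2) ≤
        s ⟨0, by omega⟩ + (s ⟨1, by omega⟩ + 1) / 2 := by
  have hk : 2 ≤ n / 2 := by omega
  refine ⟨?_, ?_, ?_⟩
  · intro x y hxy
    simp only [Fin.le_def] at hxy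
    dsimp
    split_ifs <;> omega
  · have key : ∀ K, ∑ j ∈ Finset.range K, (if j < i then q + 1 else q) = K * q + min K i := by
      intro K
      induction K with
      | zero => simp
      | succ K ih =>
        rw [Finset.sum_range_succ, ih]
        have : (K + 1) * q = K * q + q := by ring
        split_ifs <;> omega
    rw [Fin.sum_univ_eq_sum_range (fun j => if j < i then q + 1 else q), key]
    omega
  · intro s hs hsum
    have hab : s ⟨1, by omega⟩ ≤ s ⟨0, by omega⟩ := hs (by simp [Fin.le_def])
    have hbound : (n / 2) * q + i ≤ s ⟨0, by omega⟩ + (n / 2 - 1) * s ⟨1, by omega⟩ := by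
      rw [← hm, ← hsum,
        ← Finset.add_sum_erase _ s (Finset.mem_univ (⟨0, by omega⟩ : Fin (n / 2)))]
      gcongr
      calc ∑ j ∈ Finset.univ.erase (⟨0, by omega⟩ : Fin (n / 2)), s j
          ≤ ∑ _j ∈ Finset.univ.erase (⟨0, by omega⟩ : Fin (n / 2)), s ⟨1, by omega⟩ := by
            apply Finset.sum_le_sum
            intro j hj
            have hj0 : j ≠ ⟨0, by omega⟩ := Finset.ne_of_mem_erase hj
            have : 1 ≤ (j : ℕ) := by
              rcases Nat.eq_zero_or_pos (j : ℕ) with h | h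
              · exact absurd (Fin.ext h) hj0
              · omega
            exact hs (by simp [Fin.le_def]; omega)
        _ = (n / 2 - 1) * s ⟨1, by omega⟩ := by
            rw [Finset.sum_const, Finset.card_erase_of_mem (Finset.mem_univ _)]
            simp [Nat.smul_one_eq_cast]
    exact stmt14_aux (n / 2) q i _ _ hk hi hab hbound
end

section
/- Let ℓ be an odd prime, m ≥ 1, t ∈ Z, d ∈ Z coprime to ℓ, and for 0 ≤ j < m let Z_{ℓ^j} = {a ∈ {0,...,ℓᵐ−1} : ν_ℓ(a² − at + d) = j} and Z_{ℓ^m} = {a : ℓᵐ | a² − at + d}. Then the number of matrices [[x,y],[z,w]] ∈ GL₂(Z/ℓᵐZ) with trace t, determinant d, and x (as a residue) lying in Z_{ℓ^j} (0 ≤ j < m) equals |Z_{ℓ^j}| · (j+1) · φ(ℓᵐ). -/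
private lemma zmod_intCast_eq_iff (n : ℕ) (x y : ℤ) :
    ((x : ZMod n) = (y : ZMod n)) ↔ (n : ℤ) ∣ y - x := by
  rw [ZMod.intCast_eq_intCast_iff, Int.modEq_iff_dvd]

/-- y*z = ℓ^(j+1) with y nonunit, in ZMod ℓ^(m+1), bijects with
    (solutions of y'z' = ℓ^j in ZMod ℓ^m) × ZMod ℓ. -/
private lemma nonunit_card (ℓ : ℕ) (hℓ : ℓ.Prime) (m j : ℕ) :
    Nat.card {p : ZMod (ℓ^(m+1)) × ZMod (ℓ^(m+1)) //
        (p.1 * p.2 = (ℓ : ZMod (ℓ^(m+1)))^(j+1)) ∧ ¬ IsUnit p.1} =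
      Nat.card {q : ZMod (ℓ^m) × ZMod (ℓ^m) // q.1 * q.2 = (ℓ : ZMod (ℓ^m))^j} * ℓ := by
  have hℓ0 : 0 < ℓ := hℓ.pos
  haveI : NeZero (ℓ^(m+1)) := ⟨pow_ne_zero _ hℓ.ne_zero⟩
  haveI : NeZero (ℓ^m) := ⟨pow_ne_zero _ hℓ.ne_zero⟩
  haveI : NeZero ℓ := ⟨hℓ.ne_zero⟩
  have hMN : (ℓ:ℤ)^(m+1) = ℓ * ℓ^m := by ring
  -- divisibility from nonunit
  have hdvd : ∀ y : ZMod (ℓ^(m+1)), ¬ IsUnit y → ℓ ∣ y.val := by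
    intro y hy
    by_contra hdy
    apply hy
    rw [← ZMod.natCast_zmod_val y, ZMod.isUnit_iff_coprime,
      Nat.coprime_pow_right_iff (Nat.succ_pos m)]
    exact (Nat.coprime_comm.mp ((hℓ.coprime_iff_not_dvd).mpr hdy))
  have hcard : Nat.card ({q : ZMod (ℓ^m) × ZMod (ℓ^m) // q.1 * q.2 = (ℓ : ZMod (ℓ^m))^j} × ZMod ℓ)
      = Nat.card {q : ZMod (ℓ^m) × ZMod (ℓ^m) // q.1 * q.2 = (ℓ : ZMod (ℓ^m))^j} * ℓ := by
    rw [Nat.card_prod, Nat.card_zmod]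
  rw [← hcard]
  apply Nat.card_congr
  refine
  { toFun := fun p =>
      ⟨⟨(((p.1.1.val / ℓ : ℕ) : ZMod (ℓ^m)), ((p.1.2.val : ℕ) : ZMod (ℓ^m))), ?_⟩,
        ((p.1.2.val / ℓ^m : ℕ) : ZMod ℓ)⟩
    invFun := fun q =>
      ⟨⟨((ℓ * q.1.1.1.val : ℕ) : ZMod (ℓ^(m+1))),
        ((q.1.1.2.val + q.2.val * ℓ^m : ℕ) : ZMod (ℓ^(m+1)))⟩, ?_, ?_⟩
    left_inv := ?_
    right_inv := ?_ }
  · -- forward condition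
    obtain ⟨⟨y, z⟩, h1, h2⟩ := p
    have hy : ℓ ∣ y.val := hdvd y h2
    have h1' : ((y.val * z.val : ℕ) : ZMod (ℓ^(m+1))) = ((ℓ^(j+1) : ℕ) : ZMod (ℓ^(m+1))) := by
      push_cast
      rw [ZMod.natCast_zmod_val, ZMod.natCast_zmod_val]
      exact h1
    have H : ((ℓ:ℤ)^(m+1)) ∣ ((ℓ:ℤ)^(j+1) - (y.val : ℤ) * z.val) := by
      have := (Nat.modEq_iff_dvd).mp ((ZMod.natCast_eq_natCast_iff _ _ _).mp h1')
      push_cast at this ⊢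
      exact this
    obtain ⟨a, ha⟩ : ∃ a, y.val = ℓ * a := hy
    have H2 : ((ℓ:ℤ)^m) ∣ ((ℓ:ℤ)^j - (a : ℤ) * z.val) := by
      have hne : (ℓ:ℤ) ≠ 0 := by exact_mod_cast hℓ.ne_zero
      rw [← mul_dvd_mul_iff_left hne]
      have : (ℓ:ℤ) * ((ℓ:ℤ)^j - (a:ℤ) * z.val) = (ℓ:ℤ)^(j+1) - (y.val:ℤ) * z.val := by
        have : (y.val : ℤ) = ℓ * a := by exact_mod_cast ha
        rw [this]; ring
      rw [this, ← hMN]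
      exact H
    have hgoal : ((a * z.val : ℕ) : ZMod (ℓ^m)) = ((ℓ^j : ℕ) : ZMod (ℓ^m)) := by
      rw [ZMod.natCast_eq_natCast_iff, Nat.modEq_iff_dvd]
      push_cast
      have : ((ℓ:ℤ)^j - (a:ℤ) * z.val) = ((ℓ:ℤ)^j - (a:ℤ) * z.val) := rfl
      push_cast at H2
      exact H2
    have hav : y.val / ℓ = a := by rw [ha, Nat.mul_div_cancel_left _ hℓ0]
    rw [hav]
    push_cast at hgoal
    convert hgoal using 2
  · -- product condition backward
    obtain ⟨⟨⟨y, z⟩, hq⟩, k⟩ := q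
    have hq' : ((y.val * z.val : ℕ) : ZMod (ℓ^m)) = ((ℓ^j : ℕ) : ZMod (ℓ^m)) := by
      push_cast
      rw [ZMod.natCast_zmod_val, ZMod.natCast_zmod_val]
      exact hq
    obtain ⟨c, hc⟩ : ((ℓ:ℤ)^m) ∣ ((ℓ:ℤ)^j - (y.val:ℤ) * z.val) := by
      have := (Nat.modEq_iff_dvd).mp ((ZMod.natCast_eq_natCast_iff _ _ _).mp hq')
      push_cast at this ⊢
      exact this
    show ((ℓ * y.val : ℕ) : ZMod (ℓ^(m+1))) * ((z.val + k.val * ℓ^m : ℕ) : ZMod (ℓ^(m+1)))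
        = (ℓ : ZMod (ℓ^(m+1)))^(j+1)
    rw [← Nat.cast_mul, show ((ℓ : ZMod (ℓ^(m+1)))^(j+1)) = ((ℓ^(j+1) : ℕ) : ZMod (ℓ^(m+1))) by push_cast; ring,
      ZMod.natCast_eq_natCast_iff, Nat.modEq_iff_dvd]
    push_cast
    refine ⟨c - (y.val:ℤ) * k.val, ?_⟩
    linear_combination (ℓ:ℤ) * hc
  · -- nonunit backward
    rw [ZMod.isUnit_iff_coprime]
    intro h
    have h1 : ℓ ∣ Nat.gcd (ℓ * q.1.1.1.val) (ℓ^(m+1)) :=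
      Nat.dvd_gcd (Dvd.intro _ rfl) (dvd_pow_self ℓ (Nat.succ_ne_zero m))
    rw [h] at h1
    exact hℓ.one_lt.ne' (Nat.eq_one_of_dvd_one h1)
  · -- left inverse
    rintro ⟨⟨y, z⟩, h1, h2⟩
    have hy : ℓ ∣ y.val := hdvd y h2
    have hyl : y.val < ℓ^(m+1) := ZMod.val_lt y
    have hzl : z.val < ℓ^(m+1) := ZMod.val_lt z
    have hdl : y.val / ℓ < ℓ^m := by
      rw [Nat.div_lt_iff_lt_mul hℓ0, ← pow_succ]
      exact hyl
    have hzd : z.val / ℓ^m < ℓ := by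
      rw [Nat.div_lt_iff_lt_mul (pow_pos hℓ0 m), ← pow_succ']
      exact hzl
    apply Subtype.ext
    refine Prod.ext ?_ ?_
    · show ((ℓ * (((y.val / ℓ : ℕ) : ZMod (ℓ^m)).val) : ℕ) : ZMod (ℓ^(m+1))) = y
      rw [ZMod.val_cast_of_lt hdl, Nat.mul_div_cancel' hy, ZMod.natCast_zmod_val]
    · show ((((z.val : ℕ) : ZMod (ℓ^m)).val + ((z.val / ℓ^m : ℕ) : ZMod ℓ).val * ℓ^m : ℕ)
          : ZMod (ℓ^(m+1))) = z
      rw [ZMod.val_natCast, ZMod.val_cast_of_lt hzd, Nat.mod_add_div', ZMod.natCast_zmod_val]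
  · -- right inverse
    rintro ⟨⟨⟨y, z⟩, hq⟩, k⟩
    have hyl : y.val < ℓ^m := ZMod.val_lt y
    have hzl : z.val < ℓ^m := ZMod.val_lt z
    have hkl : k.val < ℓ := ZMod.val_lt k
    have h0 : 0 < ℓ^m := pow_pos hℓ0 m
    have hyb : ℓ * y.val < ℓ^(m+1) := by
      rw [pow_succ']
      nlinarith
    have hzb : z.val + k.val * ℓ^m < ℓ^(m+1) := by
      rw [pow_succ']
      nlinarith
    refine Prod.ext ?_ ?_
    · apply Subtype.ext
      refine Prod.ext ?_ ?_
      · show ((((ℓ * y.val : ℕ) : ZMod (ℓ^(m+1))).val / ℓ : ℕ) : ZMod (ℓ^m)) = y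
        rw [ZMod.val_cast_of_lt hyb, Nat.mul_div_cancel_left _ hℓ0, ZMod.natCast_zmod_val]
      · show ((((z.val + k.val * ℓ^m : ℕ) : ZMod (ℓ^(m+1))).val : ℕ) : ZMod (ℓ^m)) = z
        rw [ZMod.val_cast_of_lt hzb]
        push_cast
        rw [show ((ℓ : ZMod (ℓ^m)))^m = 0 by rw [← Nat.cast_pow, ZMod.natCast_self]]
        simp [ZMod.natCast_zmod_val]
    · show ((((z.val + k.val * ℓ^m : ℕ) : ZMod (ℓ^(m+1))).val / ℓ^m : ℕ) : ZMod ℓ) = k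
      rw [ZMod.val_cast_of_lt hzb, Nat.add_mul_div_right _ _ h0,
        Nat.div_eq_of_lt hzl, zero_add, ZMod.natCast_zmod_val]

private lemma unit_card (N : ℕ) [NeZero N] (c : ZMod N) :
    Nat.card {p : ZMod N × ZMod N // p.1 * p.2 = c ∧ IsUnit p.1}
      = Nat.card (ZMod N)ˣ := by
  apply Nat.card_congr
  refine
  { toFun := fun p => p.2.2.unit
    invFun := fun u => ⟨(↑u, ↑u⁻¹ * c), by rw [← mul_assoc, Units.mul_inv, one_mul], u.isUnit⟩
    left_inv := ?_
    right_inv := fun u => Units.ext (IsUnit.unit_spec _) }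
  rintro ⟨⟨y, z⟩, h1, h2⟩
  apply Subtype.ext
  refine Prod.ext h2.unit_spec ?_
  show ↑(h2.unit)⁻¹ * c = z
  rw [← h1]
  show ↑(h2.unit)⁻¹ * ((y, z).1 * (y, z).2) = z
  rw [← mul_assoc]
  simp [IsUnit.val_inv_mul]

private lemma sol_card (ℓ : ℕ) (hℓ : ℓ.Prime) :
    ∀ j m : ℕ, j < m →
    Nat.card {p : ZMod (ℓ^m) × ZMod (ℓ^m) // p.1 * p.2 = (ℓ : ZMod (ℓ^m))^j}
      = (j+1) * (ℓ^m).totient := by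
  intro j
  induction j with
  | zero =>
    intro m hm
    haveI : NeZero (ℓ^m) := ⟨pow_ne_zero _ hℓ.ne_zero⟩
    rw [zero_add, one_mul, ← ZMod.card_units_eq_totient, ← Nat.card_eq_fintype_card]
    apply Nat.card_congr
    refine
    { toFun := fun p => Units.mkOfMulEqOne p.1.1 p.1.2 (by rw [p.2, pow_zero])
      invFun := fun u => ⟨(↑u, ↑u⁻¹), by rw [Units.mul_inv, pow_zero]⟩
      left_inv := ?_
      right_inv := fun u => Units.ext rfl }
    rintro ⟨⟨y, z⟩, h⟩
    apply Subtype.ext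
    refine Prod.ext rfl ?_
    rfl
  | succ j ih =>
    intro m hm
    match m, hm with
    | m'+1, hm =>
    haveI : NeZero (ℓ^(m'+1)) := ⟨pow_ne_zero _ hℓ.ne_zero⟩
    have hj : j < m' := by omega
    have hm1 : 1 ≤ m' := by omega
    classical
    have hsplit : Nat.card {p : ZMod (ℓ^(m'+1)) × ZMod (ℓ^(m'+1)) //
          p.1 * p.2 = (ℓ : ZMod (ℓ^(m'+1)))^(j+1)}
        = Nat.card {p : ZMod (ℓ^(m'+1)) × ZMod (ℓ^(m'+1)) //
            (p.1 * p.2 = (ℓ : ZMod (ℓ^(m'+1)))^(j+1)) ∧ IsUnit p.1}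
          + Nat.card {p : ZMod (ℓ^(m'+1)) × ZMod (ℓ^(m'+1)) //
            (p.1 * p.2 = (ℓ : ZMod (ℓ^(m'+1)))^(j+1)) ∧ ¬ IsUnit p.1} := by
      rw [← Nat.card_sum]
      apply Nat.card_congr
      exact (((Equiv.subtypeSubtypeEquivSubtypeInter _ _).symm.sumCongr
        (Equiv.subtypeSubtypeEquivSubtypeInter _ _).symm).trans
        (Equiv.sumCompl (fun x : {p : ZMod (ℓ^(m'+1)) × ZMod (ℓ^(m'+1)) //
          p.1 * p.2 = (ℓ : ZMod (ℓ^(m'+1)))^(j+1)} => IsUnit x.1.1))).symm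
    rw [hsplit, unit_card, nonunit_card ℓ hℓ m' j, ih m' hj,
      Nat.card_eq_fintype_card, ZMod.card_units_eq_totient]
    have h1 : (ℓ^(m'+1)).totient = ℓ^m' * (ℓ - 1) := by
      rw [Nat.totient_prime_pow hℓ (Nat.succ_pos m')]; simp
    have h2 : (ℓ^m').totient = ℓ^(m'-1) * (ℓ - 1) := by
      rw [Nat.totient_prime_pow hℓ (by omega)]
    have h3 : ℓ^(m'-1) * ℓ = ℓ^m' := by
      rw [← pow_succ]; congr 1; omega
    rw [h1, h2]
    calc ℓ^m' * (ℓ-1) + (j+1) * (ℓ^(m'-1) * (ℓ-1)) * ℓ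
        = ℓ^m' * (ℓ-1) + (j+1) * (ℓ^(m'-1) * ℓ) * (ℓ-1) := by ring
      _ = (j+1+1) * (ℓ^m' * (ℓ-1)) := by rw [h3]; ring

private lemma sol_card_int (ℓ : ℕ) (hℓ : ℓ.Prime) (m j : ℕ) (hj : j < m) (c : ℤ)
    (h1 : (ℓ:ℤ)^j ∣ c) (h2 : ¬ (ℓ:ℤ)^(j+1) ∣ c) :
    Nat.card {p : ZMod (ℓ^m) × ZMod (ℓ^m) // p.1 * p.2 = (c : ZMod (ℓ^m))}
      = (j+1) * (ℓ^m).totient := by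
  haveI : NeZero (ℓ^m) := ⟨pow_ne_zero _ hℓ.ne_zero⟩
  obtain ⟨u, hu⟩ := h1
  have hℓu : ¬ (ℓ:ℤ) ∣ u := by
    intro hd
    exact h2 (by rw [hu, pow_succ]; exact mul_dvd_mul_left _ hd)
  have hcop : IsCoprime (ℓ:ℤ) u := (Nat.prime_iff_prime_int.mp hℓ).coprime_iff_not_dvd.mpr hℓu
  have hunit : IsUnit ((u : ℤ) : ZMod (ℓ^m)) := by
    obtain ⟨a, b, hab⟩ := (hcop.symm.pow_right (n := m))
    have := congrArg (fun x : ℤ => (x : ZMod (ℓ^m))) hab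
    push_cast at this
    rw [show ((ℓ : ZMod (ℓ^m)))^m = 0 by rw [← Nat.cast_pow, ZMod.natCast_self],
      mul_zero, add_zero] at this
    exact IsUnit.of_mul_eq_one _ (by rw [mul_comm] at this; exact this)
  rw [← sol_card ℓ hℓ j m hj]
  apply Nat.card_congr
  refine Equiv.subtypeEquiv ((Equiv.refl _).prodCongr (Units.mulRight hunit.unit⁻¹)) ?_
  rintro ⟨y, z⟩
  show y * z = (c : ZMod (ℓ^m)) ↔ y * (z * ↑hunit.unit⁻¹) = (ℓ : ZMod (ℓ^m))^j
  rw [← mul_assoc, Units.mul_inv_eq_iff_eq_mul, IsUnit.unit_spec]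
  constructor
  · intro h
    rw [h, hu]
    push_cast
    ring
  · intro h
    rw [hu]
    push_cast
    rw [h]

/-- Let `ℓ` be an odd prime, `m ≥ 1`, `t d : ℤ` with `d` coprime to `ℓ`, and `0 ≤ j < m`.
The number of matrices `[[x,y],[z,w]] ∈ GL₂(ZMod (ℓ^m))` with trace `t`, determinant `d`
and upper-left entry `x` represented by a residue `a ∈ Z_{ℓ^j}` (i.e. `ν_ℓ(a² - at + d) = j`)
equals `|Z_{ℓ^j}| · (j+1) · φ(ℓ^m)`. -/
theorem stmt17 (ℓ m : ℕ) (hℓ : ℓ.Prime) (hodd : Odd ℓ) (hm : 1 ≤ m) (t d : ℤ)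
    (hd : IsCoprime d (ℓ : ℤ)) (j : ℕ) (hj : j < m) :
    Nat.card {A : Matrix (Fin 2) (Fin 2) (ZMod (ℓ ^ m)) //
        IsUnit A.det ∧ A.trace = (t : ZMod (ℓ ^ m)) ∧ A.det = (d : ZMod (ℓ ^ m)) ∧
        ∃ a : ℕ, a < ℓ ^ m ∧ ((ℓ : ℤ) ^ j ∣ ((a : ℤ) ^ 2 - a * t + d)) ∧
          ¬ ((ℓ : ℤ) ^ (j + 1) ∣ ((a : ℤ) ^ 2 - a * t + d)) ∧ A 0 0 = (a : ZMod (ℓ ^ m))} =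
      ({a : ℕ | a < ℓ ^ m ∧ ((ℓ : ℤ) ^ j ∣ ((a : ℤ) ^ 2 - a * t + d)) ∧
          ¬ ((ℓ : ℤ) ^ (j + 1) ∣ ((a : ℤ) ^ 2 - a * t + d))}).ncard *
        ((j + 1) * Nat.totient (ℓ ^ m)) := by
  classical
  haveI : NeZero (ℓ^m) := ⟨pow_ne_zero _ hℓ.ne_zero⟩
  set N := ℓ ^ m with hN
  set Zfin : Finset ℕ := (Finset.range N).filter
    (fun a => ((ℓ : ℤ) ^ j ∣ ((a : ℤ) ^ 2 - a * t + d)) ∧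
      ¬ ((ℓ : ℤ) ^ (j + 1) ∣ ((a : ℤ) ^ 2 - a * t + d))) with hZfin
  have hset : ({a : ℕ | a < ℓ ^ m ∧ ((ℓ : ℤ) ^ j ∣ ((a : ℤ) ^ 2 - a * t + d)) ∧
          ¬ ((ℓ : ℤ) ^ (j + 1) ∣ ((a : ℤ) ^ 2 - a * t + d))}) = ↑Zfin := by
    ext a
    simp [hZfin, hN, Finset.mem_filter, Finset.mem_range, and_assoc]
  rw [hset, Set.ncard_coe_finset]
  -- the unit d
  have hdu : IsUnit ((d : ℤ) : ZMod N) := by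
    obtain ⟨a, b, hab⟩ := (hd.pow_right (n := m))
    have := congrArg (fun x : ℤ => (x : ZMod N)) hab
    push_cast at this
    rw [show ((ℓ : ZMod N))^m = 0 by rw [← Nat.cast_pow, ZMod.natCast_self],
      mul_zero, add_zero] at this
    exact IsUnit.of_mul_eq_one _ (by rw [mul_comm] at this; exact this)
  -- the equivalence
  have E : {A : Matrix (Fin 2) (Fin 2) (ZMod N) //
        IsUnit A.det ∧ A.trace = (t : ZMod N) ∧ A.det = (d : ZMod N) ∧
        ∃ a : ℕ, a < N ∧ ((ℓ : ℤ) ^ j ∣ ((a : ℤ) ^ 2 - a * t + d)) ∧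
          ¬ ((ℓ : ℤ) ^ (j + 1) ∣ ((a : ℤ) ^ 2 - a * t + d)) ∧ A 0 0 = (a : ZMod N)} ≃
      Σ a : ↥Zfin, {p : ZMod N × ZMod N //
        p.1 * p.2 = ((((a : ℕ) : ℤ) * t - ((a : ℕ) : ℤ)^2 - d : ℤ) : ZMod N)} := by
    refine
    { toFun := fun A => ⟨⟨(A.1 0 0).val, ?_⟩, ⟨(A.1 0 1, A.1 1 0), ?_⟩⟩
      invFun := fun x =>
        ⟨!![((x.1 : ℕ) : ZMod N), x.2.1.1; x.2.1.2, (t : ZMod N) - ((x.1 : ℕ) : ZMod N)],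
          ?_, ?_, ?_, ?_⟩
      left_inv := ?_
      right_inv := ?_ }
    · -- membership
      obtain ⟨A, hU, htr, hdet, a, haN, hd1, hd2, haA⟩ := A
      have hv : (A 0 0).val = a := by rw [haA, ZMod.val_cast_of_lt haN]
      rw [Finset.mem_filter, Finset.mem_range, hv]
      exact ⟨haN, hd1, hd2⟩
    · -- product condition
      obtain ⟨A, hU, htr, hdet, a, haN, hd1, hd2, haA⟩ := A
      have hv : ((A 0 0).val : ZMod N) = A 0 0 := ZMod.natCast_zmod_val _
      rw [Matrix.det_fin_two] at hdet
      rw [Matrix.trace_fin_two] at htr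
      show A 0 1 * A 1 0 = _
      push_cast
      rw [hv]
      linear_combination (-1 : ZMod N) * hdet + A 0 0 * htr
    · -- IsUnit det
      rw [Matrix.det_fin_two_of]
      obtain ⟨⟨a, ha⟩, ⟨⟨y, z⟩, hyz⟩⟩ := x
      push_cast at hyz ⊢
      rw [show ((a : ZMod N) * ((t : ZMod N) - (a : ZMod N)) - y * z) = (d : ZMod N) by
        linear_combination -hyz]
      exact hdu
    · -- trace
      rw [Matrix.trace_fin_two]
      obtain ⟨⟨a, ha⟩, ⟨⟨y, z⟩, hyz⟩⟩ := x
      show ((a : ℕ) : ZMod N) + ((t : ZMod N) - _) = _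
      ring
    · -- det
      rw [Matrix.det_fin_two_of]
      obtain ⟨⟨a, ha⟩, ⟨⟨y, z⟩, hyz⟩⟩ := x
      push_cast at hyz ⊢
      linear_combination -hyz
    · -- existential
      obtain ⟨⟨a, ha⟩, ⟨⟨y, z⟩, hyz⟩⟩ := x
      rw [Finset.mem_filter, Finset.mem_range] at ha
      exact ⟨a, ha.1, ha.2.1, ha.2.2, by simp⟩
    · -- left inverse
      rintro ⟨A, hU, htr, hdet, hex⟩
      apply Subtype.ext
      show !![_, _; _, _] = A
      have hv : ((A 0 0).val : ZMod N) = A 0 0 := ZMod.natCast_zmod_val _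
      rw [Matrix.trace_fin_two] at htr
      have h11 : (t : ZMod N) - A 0 0 = A 1 1 := by linear_combination -htr
      ext i k
      fin_cases i <;> fin_cases k <;> simp [hv, h11]
    · -- right inverse
      rintro ⟨⟨a, ha⟩, ⟨⟨y, z⟩, hyz⟩⟩
      have haN : a < N := Finset.mem_range.mp (Finset.mem_filter.mp ha).1
      have hM00 : (!![((a : ℕ) : ZMod N), y; z, (t : ZMod N) - ((a : ℕ) : ZMod N)]) 0 0
          = ((a : ℕ) : ZMod N) := by simp
      have hval : ((!![((a : ℕ) : ZMod N), y; z,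
          (t : ZMod N) - ((a : ℕ) : ZMod N)]) 0 0).val = a := by
        rw [hM00, ZMod.val_cast_of_lt haN]
      refine Sigma.ext (Subtype.ext hval) ?_
      refine (Subtype.heq_iff_coe_eq ?_).mpr ?_
      · intro x
        dsimp only
        rw [hval]
      · dsimp only
        simp
  rw [Nat.card_congr E, Nat.card_eq_fintype_card, Fintype.card_sigma]
  have hterm : ∀ a : ↥Zfin, Fintype.card {p : ZMod N × ZMod N //
      p.1 * p.2 = ((((a : ℕ) : ℤ) * t - ((a : ℕ) : ℤ)^2 - d : ℤ) : ZMod N)}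
        = (j+1) * N.totient := by
    rintro ⟨a, ha⟩
    rw [Finset.mem_filter] at ha
    rw [← Nat.card_eq_fintype_card]
    apply sol_card_int ℓ hℓ m j hj
    · rw [show (a:ℤ)*t - (a:ℤ)^2 - d = -((a:ℤ)^2 - (a:ℤ)*t + d) by ring]
      exact dvd_neg.mpr ha.2.1
    · rw [show (a:ℤ)*t - (a:ℤ)^2 - d = -((a:ℤ)^2 - (a:ℤ)*t + d) by ring]
      intro hdd
      exact ha.2.2 (dvd_neg.mp hdd)
  rw [Finset.sum_congr rfl (fun a _ => hterm a), Finset.sum_const, Finset.card_univ,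
    Fintype.card_coe, smul_eq_mul]
end
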